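/- arXiv:2602.16183 — 6 statements merged into one kernel-verified Lean document; each statement's English description precedes it below -/
import Mathlib

section
/- Let X be a finite type and let f : Finset X → ℝ be monotone and submodular. Then for all finite sets O, R ⊆ X one has f(O) ≤ f(R) + Σ_{j ∈ O} (f(R ∪ {j}) − f(R)). -/
open Finset

/-- For a monotone submodular `f`, the value of any set `O` is bounded
by `f R` plus the sum over `j ∈ O` of the marginal gains of adding `j` to `R`. -/
theorem submodular_marginal_bound
    {X : Type*} [Fintype X] [DecidableEq X]
    (f : Finset X → ℝ)
    (hmono : ∀ S T : Finset X, S ⊆ T → f S ≤ f T)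
    (hsub : ∀ S T : Finset X, f (S ∪ T) + f (S ∩ T) ≤ f S + f T)
    (O R : Finset X) :
    f O ≤ f R + ∑ j ∈ O, (f (insert j R) - f R) := by
  have key : ∀ S : Finset X, f (S ∪ R) ≤ f R + ∑ j ∈ S, (f (insert j R) - f R) := by
    intro S
    induction S using Finset.induction_on with
    | empty => simp
    | @insert a T ha ih =>
      have h1 := hsub (T ∪ R) (insert a R)
      have h2 : R ⊆ (T ∪ R) ∩ insert a R := by
        intro x hx; simp [hx]
      have h3 := hmono R _ h2
      have h4 : (T ∪ R) ∪ insert a R = insert a T ∪ R := by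
        ext x; simp
        
      rw [h4] at h1
      rw [Finset.sum_insert ha]
      linarith [ih]
  calc f O ≤ f (O ∪ R) := hmono _ _ Finset.subset_union_left
    _ ≤ _ := key O
end

section
/- Let X be a finite type, f : Finset X → ℝ monotone and submodular, and y : X → ℝ with 0 ≤ y_j ≤ 1 for all j. Then for every finite set O ⊆ X, f(O) ≤ F(y) + Σ_{j ∈ O} E[f_R(j)]. Consequently, for any family 𝓘 of subsets of X and any OPT ∈ 𝓘 attaining max_{S ∈ 𝓘} f(S), one has f(OPT) ≤ F(y) + max_{I ∈ 𝓘} Σ_{j ∈ I} E[f_R(j)]. -/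
open Finset

/-- The multilinear extension `F(y)` of a set function `f`: the expectation of `f(R)`
where `R` includes each element `j` independently with probability `y j`. -/
noncomputable def mlext {X : Type*} [Fintype X] [DecidableEq X]
    (f : Finset X → ℝ) (y : X → ℝ) : ℝ :=
  ∑ R : Finset X, f R * ((∏ j ∈ R, y j) * ∏ j ∈ Rᶜ, (1 - y j))

/-- The expected marginal `E[f_R(j)]` of element `j` under sampling probabilities `y`. -/
noncomputable def margE {X : Type*} [Fintype X] [DecidableEq X]
    (f : Finset X → ℝ) (y : X → ℝ) (j : X) : ℝ :=
  ∑ R : Finset X, (f (insert j R) - f R) * ((∏ j' ∈ R, y j') * ∏ j' ∈ Rᶜ, (1 - y j'))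

/-- For monotone submodular `f` and any `y ∈ [0,1]^X`,
`f(O) ≤ F(y) + ∑_{j ∈ O} E[f_R(j)]` for every `O`; consequently, for a family `𝓘`
with maximizer `OPT ∈ 𝓘`, `f(OPT) ≤ F(y) + max_{I ∈ 𝓘} ∑_{j ∈ I} E[f_R(j)]`. -/
theorem opt_le_mlext_add_marginals
    {X : Type*} [Fintype X] [DecidableEq X]
    (f : Finset X → ℝ)
    (hmono : ∀ S T : Finset X, S ⊆ T → f S ≤ f T)
    (hsub : ∀ S T : Finset X, f (S ∪ T) + f (S ∩ T) ≤ f S + f T)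
    (y : X → ℝ) (hy : ∀ j : X, y j ∈ Set.Icc (0 : ℝ) 1) :
    (∀ O : Finset X, f O ≤ mlext f y + ∑ j ∈ O, margE f y j) ∧
    (∀ (𝓘 : Finset (Finset X)) (OPT : Finset X) (hOPT : OPT ∈ 𝓘),
      (∀ S ∈ 𝓘, f S ≤ f OPT) →
      f OPT ≤ mlext f y + 𝓘.sup' ⟨OPT, hOPT⟩ (fun I => ∑ j ∈ I, margE f y j)) := by
    classical
  set w : Finset X → ℝ := fun R => (∏ j ∈ R, y j) * ∏ j ∈ Rᶜ, (1 - y j) with hw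
  have hw0 : ∀ R, 0 ≤ w R := by
    intro R
    apply mul_nonneg <;> apply Finset.prod_nonneg <;> intro j _
    · exact (hy j).1
    · linarith [(hy j).2]
  have hw1 : ∑ R : Finset X, w R = 1 := by
    have h := Finset.prod_add (fun j => y j) (fun j => 1 - y j) (univ : Finset X)
    simp only [add_sub_cancel, Finset.prod_const_one, Finset.powerset_univ] at h
    rw [hw]
    simp only [Finset.compl_eq_univ_sdiff]
    exact h.symm
  have key : ∀ (R O : Finset X), f (R ∪ O) ≤ f R + ∑ j ∈ O, (f (insert j R) - f R) := by
    intro R O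
    induction O using Finset.induction_on with
    | empty => simp
    | @insert a O ha ih =>
      have hUnion : insert a R ∪ (R ∪ O) = insert a (R ∪ O) := by
        ext x; simp
      have hInter : insert a R ∩ (R ∪ O) = R := by
        ext x
        simp only [Finset.mem_inter, Finset.mem_insert, Finset.mem_union]
        constructor
        · rintro ⟨rfl | hxR, hx2⟩
          · rcases hx2 with h | h
            · exact h
            · exact absurd h ha
          · exact hxR
        · intro hx; exact ⟨Or.inr hx, Or.inl hx⟩
      have h := hsub (insert a R) (R ∪ O)
      rw [hUnion, hInter] at h
      rw [Finset.union_insert, Finset.sum_insert ha]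
      linarith
  have part1 : ∀ O : Finset X, f O ≤ mlext f y + ∑ j ∈ O, margE f y j := by
    intro O
    have expand : ∑ R : Finset X, w R * (f R + ∑ j ∈ O, (f (insert j R) - f R))
        = mlext f y + ∑ j ∈ O, margE f y j := by
      simp only [mul_add, Finset.sum_add_distrib]
      congr 1
      · exact Finset.sum_congr rfl fun R _ => mul_comm _ _
      · simp only [Finset.mul_sum]
        rw [Finset.sum_comm]
        exact Finset.sum_congr rfl fun j _ =>
          Finset.sum_congr rfl fun R _ => mul_comm _ _
    calc f O = ∑ R : Finset X, w R * f O := by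
          rw [← Finset.sum_mul, hw1, one_mul]
      _ ≤ ∑ R : Finset X, w R * (f R + ∑ j ∈ O, (f (insert j R) - f R)) := by
          apply Finset.sum_le_sum
          intro R _
          apply mul_le_mul_of_nonneg_left _ (hw0 R)
          calc f O ≤ f (R ∪ O) := hmono _ _ Finset.subset_union_right
            _ ≤ _ := key R O
      _ = _ := expand
  refine ⟨part1, fun 𝓘 OPT hOPT _ => ?_⟩
  calc f OPT ≤ mlext f y + ∑ j ∈ OPT, margE f y j := part1 OPT
    _ ≤ _ := by
        gcongr
        exact Finset.le_sup' (fun I => ∑ j ∈ I, margE f y j) hOPT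
end

section
/- Let P and Q be finite sets with |P| = M ≥ 1 and |Q| = N ≥ 1, let X = P × Q, and for each i ∈ P let w_i : Finset Q → ℝ be monotone and submodular with w_i(∅) = 0; define the welfare f(S) = Σ_{i ∈ P} w_i(s_i) for S ⊆ X, where s_i = {j : (i,j) ∈ S}. Let 𝓘 be the partition matroid on X (every item j is assigned to at most one agent) and let OPT ∈ 𝓘 attain max_{S ∈ 𝓘} f(S). Let ε ≥ 0 and suppose f̂ : Finset X → ℝ satisfies |f̂(S) − f(S)| ≤ ε for all S ⊆ X. Then for every y : X → [0,1], f(OPT) ≤ F(y) + max_{I ∈ 𝓘} Σ_{j ∈ I} E[f_R(j)] + (4MN + 2M)·ε, where F is the multilinear extension of f and E[f_R(j)] is the expected marginal of j under y. -/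
open Finset

/-- The partition matroid on `P × Q`: every item `j ∈ Q` is assigned to at most one agent. -/
def partitionFeasible {P Q : Type*} [DecidableEq Q] (S : Finset (P × Q)) : Prop :=
  ∀ j : Q, (S.filter (fun p => p.2 = j)).card ≤ 1


lemma marg_bound {X : Type*} [DecidableEq X] (f : Finset X → ℝ)
    (hmono : ∀ S T : Finset X, S ⊆ T → f S ≤ f T)
    (hsub : ∀ S T : Finset X, f (S ∪ T) + f (S ∩ T) ≤ f S + f T)
    (R S : Finset X) : f (R ∪ S) ≤ f R + ∑ j ∈ S, (f (insert j R) - f R) := by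
  induction S using Finset.induction with
  | empty => simp
  | @insert a S ha ih =>
    rw [Finset.sum_insert ha]
    have hu : insert a R ∪ (R ∪ S) = R ∪ insert a S := by
      ext x; simp [Finset.mem_insert, Finset.mem_union]
    have hi : R ⊆ insert a R ∩ (R ∪ S) := by
      intro x hx; simp [hx]
    have h2 := hmono _ _ hi
    have h1 := hsub (insert a R) (R ∪ S)
    rw [hu] at h1
    linarith

lemma sum_p_one {X : Type*} [Fintype X] [DecidableEq X] (y : X → ℝ) :
    ∑ R : Finset X, (∏ j ∈ R, y j) * ∏ j ∈ Rᶜ, (1 - y j) = 1 := by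
  have h := Finset.prod_add y (fun j => 1 - y j) (Finset.univ : Finset X)
  simp only [add_sub_cancel, Finset.prod_const_one] at h
  rw [Finset.powerset_univ] at h
  calc ∑ R : Finset X, (∏ j ∈ R, y j) * ∏ j ∈ Rᶜ, (1 - y j)
      = ∑ t : Finset X, (∏ i ∈ t, y i) * ∏ i ∈ Finset.univ \ t, (1 - y i) := by
        apply Finset.sum_congr rfl
        intro R _
        rw [Finset.compl_eq_univ_sdiff]
    _ = 1 := h.symm

-- **Statement 3.** Noisy upper bound on the optimal submodular welfare:
-- `f(OPT) ≤ F(y) + max_{I ∈ 𝓘} ∑_{j ∈ I} E[f_R(j)] + (4MN + 2M)·ε`.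
open scoped Classical in
theorem noisy_opt_upper_bound
    {P Q : Type*} [Fintype P] [Fintype Q] [DecidableEq P] [DecidableEq Q]
    (M N : ℕ) (hM : M = Fintype.card P) (hN : N = Fintype.card Q)
    (hM1 : 1 ≤ M) (hN1 : 1 ≤ N)
    (w : P → Finset Q → ℝ)
    (hmono : ∀ i : P, ∀ S T : Finset Q, S ⊆ T → w i S ≤ w i T)
    (hsub : ∀ i : P, ∀ S T : Finset Q, w i (S ∪ T) + w i (S ∩ T) ≤ w i S + w i T)
    (hzero : ∀ i : P, w i ∅ = 0)
    (f : Finset (P × Q) → ℝ)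
    (hf : ∀ S : Finset (P × Q),
      f S = ∑ i : P, w i (Finset.univ.filter (fun j : Q => (i, j) ∈ S)))
    (OPT : Finset (P × Q)) (hOPTfeas : partitionFeasible OPT)
    (hOPTmax : ∀ S : Finset (P × Q), partitionFeasible S → f S ≤ f OPT)
    (ε : ℝ) (hε : 0 ≤ ε)
    (fhat : Finset (P × Q) → ℝ)
    (hfhat : ∀ S : Finset (P × Q), |fhat S - f S| ≤ ε)
    (y : P × Q → ℝ) (hy : ∀ x : P × Q, y x ∈ Set.Icc (0 : ℝ) 1) :
    f OPT ≤ mlext f y +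
      (Finset.univ.powerset.filter (fun I : Finset (P × Q) => partitionFeasible I)).sup'
        ⟨OPT, Finset.mem_filter.2 ⟨Finset.mem_powerset.2 (Finset.subset_univ _), hOPTfeas⟩⟩
        (fun I => ∑ j ∈ I, margE f y j)
      + ((4 * M * N + 2 * M : ℕ) : ℝ) * ε := by
  have hmono_f : ∀ S T : Finset (P × Q), S ⊆ T → f S ≤ f T := by
    intro S T hST
    rw [hf, hf]
    apply Finset.sum_le_sum
    intro i _
    apply hmono
    intro j hj
    simp only [Finset.mem_filter] at *
    exact ⟨hj.1, hST hj.2⟩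
  have hsub_f : ∀ S T : Finset (P × Q), f (S ∪ T) + f (S ∩ T) ≤ f S + f T := by
    intro S T
    simp only [hf, ← Finset.sum_add_distrib]
    apply Finset.sum_le_sum
    intro i _
    have hU : Finset.univ.filter (fun j : Q => (i, j) ∈ S ∪ T)
        = Finset.univ.filter (fun j : Q => (i, j) ∈ S) ∪ Finset.univ.filter (fun j : Q => (i, j) ∈ T) := by
      ext j; simp
    have hI : Finset.univ.filter (fun j : Q => (i, j) ∈ S ∩ T)
        = Finset.univ.filter (fun j : Q => (i, j) ∈ S) ∩ Finset.univ.filter (fun j : Q => (i, j) ∈ T) := by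
      ext j; simp
    rw [hU, hI]
    exact hsub i _ _
  set p : Finset (P × Q) → ℝ := fun R => (∏ j ∈ R, y j) * ∏ j ∈ Rᶜ, (1 - y j) with hp
  have hp0 : ∀ R : Finset (P × Q), 0 ≤ p R := by
    intro R
    apply mul_nonneg
    · exact Finset.prod_nonneg fun j _ => (hy j).1
    · exact Finset.prod_nonneg fun j _ => by linarith [(hy j).2]
  have key : f OPT ≤ mlext f y + ∑ j ∈ OPT, margE f y j := by
    have h1 : ∀ R : Finset (P × Q),
        f OPT ≤ f R + ∑ j ∈ OPT, (f (insert j R) - f R) := fun R =>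
      le_trans (hmono_f _ _ Finset.subset_union_right) (marg_bound f hmono_f hsub_f R OPT)
    calc f OPT = ∑ R : Finset (P × Q), f OPT * p R := by
          rw [← Finset.mul_sum, sum_p_one y, mul_one]
      _ ≤ ∑ R : Finset (P × Q), (f R + ∑ j ∈ OPT, (f (insert j R) - f R)) * p R :=
          Finset.sum_le_sum fun R _ => mul_le_mul_of_nonneg_right (h1 R) (hp0 R)
      _ = mlext f y + ∑ j ∈ OPT, margE f y j := by
          simp only [add_mul, Finset.sum_add_distrib, Finset.sum_mul]
          rw [Finset.sum_comm]
          rfl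
  have hsup := Finset.le_sup'
      (f := fun I : Finset (P × Q) => ∑ j ∈ I, margE f y j)
      (Finset.mem_filter.2 ⟨Finset.mem_powerset.2 (Finset.subset_univ OPT), hOPTfeas⟩)
  have hepos : (0 : ℝ) ≤ ((4 * M * N + 2 * M : ℕ) : ℝ) * ε :=
    mul_nonneg (Nat.cast_nonneg _) hε
  linarith
end

section
/- Let X be a finite type and let f : Finset X → ℝ be monotone. If y, y' : X → [0,1] satisfy y_j ≤ y'_j for every j ∈ X, then the multilinear extensions satisfy F(y) ≤ F(y'). -/
/-!
Restricting the multilinear extension to the coordinates in a finset `s` and expanding along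
one coordinate `i ∉ s` gives `F_{s ∪ {i}}(y) = (1 - y i) A(y) + y i B(y)`, where `A` and `B` are the
extensions over `s` of `f` and of `T ↦ f (T ∪ {i})`. By induction on `s`, `A` and `B` are monotone
in `y`, and `A ≤ B` pointwise because `f` is monotone and the weights are nonnegative on `[0,1]`;
so raising the other coordinates and then `y i` can only increase the value.
-/

open Finset

section MultilinearExtensionOn

variable {X R : Type*} [DecidableEq X]

def mlextOn [CommRing R] (s : Finset X) (f : Finset X → R) (y : X → R) : R :=
  ∑ T ∈ s.powerset, f T * ((∏ j ∈ T, y j) * ∏ j ∈ s \ T, (1 - y j))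

@[simp]
lemma mlextOn_empty [CommRing R] (f : Finset X → R) (y : X → R) : mlextOn ∅ f y = f ∅ := by
  simp [mlextOn]

lemma mlextOn_insert [CommRing R] {i : X} {s : Finset X} (hi : i ∉ s) (f : Finset X → R)
    (y : X → R) :
    mlextOn (insert i s) f y =
      (1 - y i) * mlextOn s f y + y i * mlextOn s (fun T ↦ f (insert i T)) y := by
  simp only [mlextOn, sum_powerset_insert hi, mul_sum]
  congr 1 <;> refine sum_congr rfl fun T hT ↦ ?_
  · have hiT : i ∉ T := fun h ↦ hi (mem_powerset.1 hT h)
    rw [insert_sdiff_of_notMem _ hiT, prod_insert (by simp [hi])]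
    ring
  · have hiT : i ∉ T := fun h ↦ hi (mem_powerset.1 hT h)
    rw [prod_insert hiT, insert_sdiff_insert, sdiff_insert_of_notMem hi]
    ring

variable [CommRing R] [LinearOrder R] [IsStrictOrderedRing R]

lemma mlextOn_mono_left {s : Finset X} {f g : Finset X → R} (hfg : f ≤ g) {y : X → R}
    (hy : ∀ j ∈ s, y j ∈ Set.Icc 0 1) : mlextOn s f y ≤ mlextOn s g y := by
  refine sum_le_sum fun T hT ↦ mul_le_mul_of_nonneg_right (hfg T) (mul_nonneg ?_ ?_)
  · exact prod_nonneg fun j hj ↦ (hy j (mem_powerset.1 hT hj)).1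
  · exact prod_nonneg fun j hj ↦ sub_nonneg.2 (hy j (mem_sdiff.1 hj).1).2

lemma mlextOn_mono_right {s : Finset X} {f : Finset X → R} (hf : Monotone f) {y y' : X → R}
    (hy : ∀ j ∈ s, y j ∈ Set.Icc 0 1) (hy' : ∀ j ∈ s, y' j ∈ Set.Icc 0 1)
    (hle : ∀ j ∈ s, y j ≤ y' j) : mlextOn s f y ≤ mlextOn s f y' := by
  induction s using Finset.induction_on generalizing f with
  | empty => simp
  | @insert i s hi ih =>
    have hys := fun j hj ↦ hy j (mem_insert_of_mem hj)
    have hys' := fun j hj ↦ hy' j (mem_insert_of_mem hj)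
    have hles := fun j hj ↦ hle j (mem_insert_of_mem hj)
    have hfi : Monotone fun T ↦ f (insert i T) := fun _ _ h ↦ hf (insert_subset_insert i h)
    have hA := ih hf hys hys' hles
    have hB := ih hfi hys hys' hles
    -- the value at `y'` is affine in the `i`-th coordinate with slope `B - A ≥ 0`
    have hAB : mlextOn s f y' ≤ mlextOn s (fun T ↦ f (insert i T)) y' :=
      mlextOn_mono_left (fun T ↦ hf (subset_insert i T)) hys'
    obtain ⟨hyi0, hyi1⟩ := hy i (mem_insert_self i s)
    have hlei := hle i (mem_insert_self i s)
    rw [mlextOn_insert hi, mlextOn_insert hi]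
    calc (1 - y i) * mlextOn s f y + y i * mlextOn s (fun T ↦ f (insert i T)) y
        ≤ (1 - y i) * mlextOn s f y' + y i * mlextOn s (fun T ↦ f (insert i T)) y' := by
          gcongr
      _ ≤ (1 - y' i) * mlextOn s f y' + y' i * mlextOn s (fun T ↦ f (insert i T)) y' := by
          linarith [mul_nonneg (sub_nonneg.2 hlei) (sub_nonneg.2 hAB)]

end MultilinearExtensionOn

lemma mlext_eq_mlextOn_univ {X : Type*} [Fintype X] [DecidableEq X] (f : Finset X → ℝ)
    (y : X → ℝ) : mlext f y = mlextOn univ f y := by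
  simp [mlext, mlextOn, compl_eq_univ_sdiff]

/-- The multilinear extension of a monotone set function is monotone
in the sampling probabilities: `y ≤ y'` pointwise implies `F(y) ≤ F(y')`. -/
theorem mlext_monotone
    {X : Type*} [Fintype X] [DecidableEq X]
    (f : Finset X → ℝ)
    (hmono : ∀ S T : Finset X, S ⊆ T → f S ≤ f T)
    (y y' : X → ℝ)
    (hy : ∀ j : X, y j ∈ Set.Icc (0 : ℝ) 1)
    (hy' : ∀ j : X, y' j ∈ Set.Icc (0 : ℝ) 1)
    (hle : ∀ j : X, y j ≤ y' j) :
    mlext f y ≤ mlext f y' := by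
  rw [mlext_eq_mlextOn_univ, mlext_eq_mlextOn_univ]
  exact mlextOn_mono_right hmono (fun j _ ↦ hy j) (fun j _ ↦ hy' j) fun j _ ↦ hle j
end

section
/- Let M, N ∈ ℕ with M ≥ 1, N ≥ 1, let K ∈ ℕ with K > M, set λ = 1/K and ρ = λ·(1 − M·λ), and let ε ≥ 0. Suppose G : ℕ → ℝ satisfies G(0) ≥ 0 and G(k+1) ≤ (1 − ρ)·G(k) + (4MN + 2M)·ρ·ε for all k < K. Then G(K) ≤ e^{M·λ − 1} · G(0) + (4MN + 2M)·ε. In particular, if G(0) = f_OPT ≥ 0 and F := f_OPT − G(K), then F ≥ (1 − e^{M·λ}/e)·f_OPT − (4MN + 2M)·ε. -/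
/-!
The noise level `c = (4MN + 2M)ε` is the fixed point of the step `x ↦ (1 - ρ) x + ρ c`, so
`G k - c` contracts by `1 - ρ ≥ 0` per step and `G K ≤ (1 - ρ)^K G 0 + (1 - (1 - ρ)^K) c`.
Since `Kρ = 1 - M/K`, the factor `(1 - ρ)^K` is `(1 - (1 - M/K)/K)^K ≤ e^{M/K - 1}`.
-/

theorem le_pow_mul_add_one_sub_pow_mul_of_le_mul_add {u : ℕ → ℝ} {a c : ℝ} {K : ℕ} (ha : 0 ≤ a)
    (hu : ∀ k < K, u (k + 1) ≤ a * u k + (1 - a) * c) :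
    ∀ k ≤ K, u k ≤ a ^ k * u 0 + (1 - a ^ k) * c := by
  intro k hk
  induction k with
  | zero => simp
  | succ n ih =>
    calc u (n + 1) ≤ a * u n + (1 - a) * c := hu n hk
      _ ≤ a * (a ^ n * u 0 + (1 - a ^ n) * c) + (1 - a) * c := by
        gcongr; exact ih (by omega)
      _ = a ^ (n + 1) * u 0 + (1 - a ^ (n + 1)) * c := by ring

theorem one_sub_inv_mul_one_sub_pow_le_exp {M K : ℕ} (hK : M < K) :
    (1 - (1 / (K : ℝ)) * (1 - (M : ℝ) * (1 / (K : ℝ)))) ^ K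
      ≤ Real.exp ((M : ℝ) * (1 / (K : ℝ)) - 1) := by
  have hMK : (0 : ℝ) ≤ (M : ℝ) * (1 / (K : ℝ)) := by positivity
  have hK1 : (1 : ℝ) ≤ K := by exact_mod_cast (Nat.zero_le M).trans_lt hK
  convert Real.one_sub_div_pow_le_exp_neg (n := K) (t := 1 - (M : ℝ) * (1 / (K : ℝ)))
    (by linarith) using 2
  · ring
  · ring

theorem noisy_cg_gap_bound_general
    (M N : ℕ) (K : ℕ) (hK : M < K)
    (ε : ℝ) (hε : 0 ≤ ε) (G : ℕ → ℝ) (hG0 : 0 ≤ G 0)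
    (hrec : ∀ k < K,
      G (k + 1) ≤ (1 - (1 / (K : ℝ)) * (1 - (M : ℝ) * (1 / (K : ℝ)))) * G k
        + ((4 * M * N + 2 * M : ℕ) : ℝ) * ((1 / (K : ℝ)) * (1 - (M : ℝ) * (1 / (K : ℝ)))) * ε) :
    G K ≤ Real.exp ((M : ℝ) * (1 / (K : ℝ)) - 1) * G 0 + ((4 * M * N + 2 * M : ℕ) : ℝ) * ε ∧
    (∀ fOPT : ℝ, G 0 = fOPT → 0 ≤ fOPT →
      fOPT - G K ≥ (1 - Real.exp ((M : ℝ) * (1 / (K : ℝ))) / Real.exp 1) * fOPT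
        - ((4 * M * N + 2 * M : ℕ) : ℝ) * ε) := by
  set ρ : ℝ := (1 / (K : ℝ)) * (1 - (M : ℝ) * (1 / (K : ℝ)))
  set C : ℝ := ((4 * M * N + 2 * M : ℕ) : ℝ)
  have hK1 : (1 : ℝ) ≤ K := by exact_mod_cast (Nat.zero_le M).trans_lt hK
  have hρ : ρ ≤ 1 := by
    have hMK : (0 : ℝ) ≤ M * (1 / K) := by positivity
    calc ρ ≤ 1 / K := mul_le_of_le_one_right (by positivity) (by linarith)
      _ ≤ 1 := by rwa [div_le_one (by linarith)]
  have hunrolled : G K ≤ (1 - ρ) ^ K * G 0 + (1 - (1 - ρ) ^ K) * (C * ε) :=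
    le_pow_mul_add_one_sub_pow_mul_of_le_mul_add (sub_nonneg.2 hρ)
      (fun k hk => (hrec k hk).trans_eq (by ring)) K le_rfl
  have hgap : G K ≤ Real.exp ((M : ℝ) * (1 / (K : ℝ)) - 1) * G 0 + C * ε := by
    have hdecay := mul_le_mul_of_nonneg_right (one_sub_inv_mul_one_sub_pow_le_exp hK) hG0
    have hnoise : 0 ≤ (1 - ρ) ^ K * (C * ε) := by have := sub_nonneg.2 hρ; positivity
    linarith
  refine ⟨hgap, fun fOPT hG0_eq _ => ?_⟩
  rw [Real.exp_sub, hG0_eq] at hgap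
  linarith

/-- Noisy continuous-greedy gap bound with step size `λ = 1/K` and
progress factor `ρ = λ(1 − Mλ)`: unrolling the recurrence yields
`G(K) ≤ e^{Mλ−1} G(0) + (4MN + 2M)ε`, and hence for `G(0) = f_OPT ≥ 0` and
`F = f_OPT − G(K)` we get `F ≥ (1 − e^{Mλ}/e) f_OPT − (4MN + 2M)ε`. -/
theorem noisy_cg_gap_bound
    (M N : ℕ) (hM : 1 ≤ M) (hN : 1 ≤ N) (K : ℕ) (hK : M < K)
    (ε : ℝ) (hε : 0 ≤ ε) (G : ℕ → ℝ) (hG0 : 0 ≤ G 0)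
    (hrec : ∀ k < K,
      G (k + 1) ≤ (1 - (1 / (K : ℝ)) * (1 - (M : ℝ) * (1 / (K : ℝ)))) * G k
        + ((4 * M * N + 2 * M : ℕ) : ℝ) * ((1 / (K : ℝ)) * (1 - (M : ℝ) * (1 / (K : ℝ)))) * ε) :
    G K ≤ Real.exp ((M : ℝ) * (1 / (K : ℝ)) - 1) * G 0 + ((4 * M * N + 2 * M : ℕ) : ℝ) * ε ∧
    (∀ fOPT : ℝ, G 0 = fOPT → 0 ≤ fOPT →
      fOPT - G K ≥ (1 - Real.exp ((M : ℝ) * (1 / (K : ℝ))) / Real.exp 1) * fOPT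
        - ((4 * M * N + 2 * M : ℕ) : ℝ) * ε) :=
  noisy_cg_gap_bound_general M N K hK ε hε G hG0 hrec
end

section
/- Let X be a finite type, let f : Finset X → ℝ be monotone and submodular, let y : X → [0,1], let λ ∈ [0,1], and let I ⊆ X be a finite set with y_j + λ ≤ 1 for all j ∈ I. Define y' : X → [0,1] by y'_j = y_j + λ for j ∈ I and y'_j = y_j otherwise. Then F(y') ≥ F(y''), where y'' : X → [0,1] is given by y''_j = y_j + λ·(1 − y_j) for j ∈ I and y''_j = y_j otherwise; equivalently, F(y') − F(y) ≥ E[f(R ∪ D) − f(R)], where R includes each j ∈ X independently with probability y_j and, independently, D includes each j ∈ I independently with probability λ. -/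
open Finset

section Aux

variable {X : Type*} [Fintype X] [DecidableEq X]

/-- Decomposition of the multilinear extension at a coordinate `a`. -/
lemma mlext_decomp (f : Finset X → ℝ) (y : X → ℝ) (a : X) :
    mlext f y = ∑ S ∈ univ.filter (fun S : Finset X => a ∉ S),
      (y a * f (insert a S) + (1 - y a) * f S) *
        ((∏ j ∈ S, y j) * ∏ j ∈ (insert a S)ᶜ, (1 - y j)) := by
  unfold mlext
  rw [← Finset.sum_filter_add_sum_filter_not univ (fun R : Finset X => a ∈ R)]
  have h1 : ∑ R ∈ univ.filter (fun R : Finset X => a ∈ R),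
      f R * ((∏ j ∈ R, y j) * ∏ j ∈ Rᶜ, (1 - y j)) =
      ∑ S ∈ univ.filter (fun S : Finset X => a ∉ S),
      (y a * f (insert a S)) * ((∏ j ∈ S, y j) * ∏ j ∈ (insert a S)ᶜ, (1 - y j)) := by
    refine Finset.sum_bij' (fun R _ => R.erase a) (fun S _ => insert a S) ?_ ?_ ?_ ?_ ?_
    · intro R hR; simp
    · intro S hS; simp at hS ⊢
    · intro R hR; simp only [mem_filter, mem_univ, true_and] at hR
      exact Finset.insert_erase hR
    · intro S hS; simp only [mem_filter, mem_univ, true_and] at hS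
      exact Finset.erase_insert hS
    · intro R hR; simp only [mem_filter, mem_univ, true_and] at hR
      rw [Finset.insert_erase hR]
      rw [← Finset.mul_prod_erase R y hR]
      ring
  have h2 : ∑ R ∈ univ.filter (fun R : Finset X => ¬ a ∈ R),
      f R * ((∏ j ∈ R, y j) * ∏ j ∈ Rᶜ, (1 - y j)) =
      ∑ S ∈ univ.filter (fun S : Finset X => a ∉ S),
      ((1 - y a) * f S) * ((∏ j ∈ S, y j) * ∏ j ∈ (insert a S)ᶜ, (1 - y j)) := by
    refine Finset.sum_congr rfl ?_
    intro S hS; simp only [mem_filter, mem_univ, true_and] at hS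
    have haS : a ∈ Sᶜ := by simpa using hS
    rw [Finset.compl_insert, ← Finset.mul_prod_erase Sᶜ (fun j => 1 - y j) haS]
    ring
  rw [h1, h2, ← Finset.sum_add_distrib]
  refine Finset.sum_congr rfl fun S _ => by ring

/-- The weights in the decomposition don't depend on the coordinate `a`. -/
lemma weight_congr (y z : X → ℝ) (a : X) (h : ∀ j ≠ a, y j = z j) (S : Finset X) (hS : a ∉ S) :
    (∏ j ∈ S, y j) * ∏ j ∈ (insert a S)ᶜ, (1 - y j) =
    (∏ j ∈ S, z j) * ∏ j ∈ (insert a S)ᶜ, (1 - z j) := by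
  congr 1
  · exact Finset.prod_congr rfl fun j hj => h j (by rintro rfl; exact hS hj)
  · refine Finset.prod_congr rfl fun j hj => ?_
    have : j ≠ a := by
      intro hja; subst hja; simp at hj
    rw [h j this]

/-- Monotonicity of the multilinear extension under raising one coordinate. -/
lemma mlext_update_le (f : Finset X → ℝ)
    (hmono : ∀ S T : Finset X, S ⊆ T → f S ≤ f T)
    (y : X → ℝ) (hy : ∀ j : X, y j ∈ Set.Icc (0 : ℝ) 1)
    (a : X) (t : ℝ) (h1 : y a ≤ t) (h2 : t ≤ 1) :
    mlext f y ≤ mlext f (Function.update y a t) := by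
  rw [mlext_decomp f y a, mlext_decomp f (Function.update y a t) a]
  refine Finset.sum_le_sum ?_
  intro S hS
  simp only [mem_filter, mem_univ, true_and] at hS
  rw [← weight_congr y (Function.update y a t) a
    (fun j hj => (Function.update_of_ne hj t y).symm) S hS]
  rw [Function.update_self]
  have hw : 0 ≤ (∏ j ∈ S, y j) * ∏ j ∈ (insert a S)ᶜ, (1 - y j) := by
    apply mul_nonneg
    · exact Finset.prod_nonneg fun j _ => (hy j).1
    · exact Finset.prod_nonneg fun j _ => by linarith [(hy j).2]
  apply mul_le_mul_of_nonneg_right _ hw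
  have hfS : f S ≤ f (insert a S) := hmono S (insert a S) (Finset.subset_insert a S)
  nlinarith [hfS, h1]

/-- Pointwise monotonicity of the multilinear extension. -/
lemma mlext_mono (f : Finset X → ℝ)
    (hmono : ∀ S T : Finset X, S ⊆ T → f S ≤ f T)
    (y z : X → ℝ) (h0 : ∀ j, 0 ≤ y j) (hyz : ∀ j, y j ≤ z j) (h1 : ∀ j, z j ≤ 1) :
    mlext f y ≤ mlext f z := by
  have key : ∀ s : Finset X, mlext f y ≤ mlext f (fun j => if j ∈ s then z j else y j) := by
    intro s
    induction s using Finset.induction_on with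
    | empty => simp
    | @insert a s ha ih =>
      refine le_trans ih ?_
      have heq : (fun j => if j ∈ insert a s then z j else y j) =
          Function.update (fun j => if j ∈ s then z j else y j) a (z a) := by
        funext j
        by_cases hja : j = a
        · subst hja; simp [Function.update_self]
        · rw [Function.update_of_ne hja]
          simp [Finset.mem_insert, hja]
      rw [heq]
      refine mlext_update_le f hmono _ ?_ a (z a) ?_ (h1 a)
      · intro j
        by_cases hj : j ∈ s <;> simp [hj]
        · exact ⟨le_trans (h0 j) (hyz j), h1 j⟩
        · exact ⟨h0 j, le_trans (hyz j) (h1 j)⟩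
      · simp [ha]; exact hyz a
  have := key Finset.univ
  simpa using this

/-- The expectation identity: averaging `f (R ∪ D)` over independent `R ~ y` and
`D ~ lam` on `I` gives the multilinear extension at `y + lam (1 - y)` on `I`. -/
lemma expect_eq (y : X → ℝ) (lam : ℝ) (I : Finset X) (f : Finset X → ℝ) :
    ∑ R : Finset X, ∑ D ∈ I.powerset,
        f (R ∪ D) * ((∏ j ∈ R, y j) * ∏ j ∈ Rᶜ, (1 - y j)) *
          (lam ^ D.card * (1 - lam) ^ (I.card - D.card)) =
      mlext f (fun j => if j ∈ I then y j + lam * (1 - y j) else y j) := by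
  induction I using Finset.induction_on generalizing f with
  | empty => simp [mlext]
  | @insert a I ha ih =>
    have hstep : ∀ R : Finset X,
        ∑ D ∈ (insert a I).powerset,
          f (R ∪ D) * ((∏ j ∈ R, y j) * ∏ j ∈ Rᶜ, (1 - y j)) *
            (lam ^ D.card * (1 - lam) ^ ((insert a I).card - D.card)) =
        (1 - lam) * ∑ D ∈ I.powerset,
          f (R ∪ D) * ((∏ j ∈ R, y j) * ∏ j ∈ Rᶜ, (1 - y j)) *
            (lam ^ D.card * (1 - lam) ^ (I.card - D.card)) +
        lam * ∑ D ∈ I.powerset,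
          f (insert a (R ∪ D)) * ((∏ j ∈ R, y j) * ∏ j ∈ Rᶜ, (1 - y j)) *
            (lam ^ D.card * (1 - lam) ^ (I.card - D.card)) := by
      intro R
      rw [Finset.sum_powerset_insert ha, Finset.mul_sum, Finset.mul_sum]
      congr 1
      · refine Finset.sum_congr rfl fun D hD => ?_
        simp only [Finset.mem_powerset] at hD
        have hcard : D.card ≤ I.card := Finset.card_le_card hD
        rw [Finset.card_insert_of_notMem ha]
        have : I.card + 1 - D.card = (I.card - D.card) + 1 := by omega
        rw [this, pow_succ]
        ring
      · refine Finset.sum_congr rfl fun D hD => ?_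
        simp only [Finset.mem_powerset] at hD
        have haD : a ∉ D := fun h => ha (hD h)
        have hcard : D.card ≤ I.card := Finset.card_le_card hD
        rw [Finset.card_insert_of_notMem ha, Finset.card_insert_of_notMem haD,
          Finset.union_insert]
        have : I.card + 1 - (D.card + 1) = I.card - D.card := by omega
        rw [this, pow_succ]
        ring
    calc ∑ R : Finset X, ∑ D ∈ (insert a I).powerset,
          f (R ∪ D) * ((∏ j ∈ R, y j) * ∏ j ∈ Rᶜ, (1 - y j)) *
            (lam ^ D.card * (1 - lam) ^ ((insert a I).card - D.card))
        = (1 - lam) * mlext f (fun j => if j ∈ I then y j + lam * (1 - y j) else y j) +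
          lam * mlext (fun S => f (insert a S))
            (fun j => if j ∈ I then y j + lam * (1 - y j) else y j) := by
          rw [← ih f, ← ih (fun S => f (insert a S)), Finset.mul_sum, Finset.mul_sum,
            ← Finset.sum_add_distrib]
          exact Finset.sum_congr rfl fun R _ => hstep R
      _ = mlext f (fun j => if j ∈ insert a I then y j + lam * (1 - y j) else y j) := by
          set w : X → ℝ := fun j => if j ∈ I then y j + lam * (1 - y j) else y j with hw
          have hva : (fun j => if j ∈ insert a I then y j + lam * (1 - y j) else y j) =
              Function.update w a (y a + lam * (1 - y a)) := by
            funext j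
            by_cases hja : j = a
            · subst hja; simp [Function.update_self, hw, ha]
            · rw [Function.update_of_ne hja]
              simp [hw, Finset.mem_insert, hja]
          rw [hva]
          rw [mlext_decomp f (Function.update w a (y a + lam * (1 - y a))) a,
            mlext_decomp f w a, mlext_decomp (fun S => f (insert a S)) w a]
          rw [Finset.mul_sum, Finset.mul_sum, ← Finset.sum_add_distrib]
          refine Finset.sum_congr rfl fun S hS => ?_
          simp only [mem_filter, mem_univ, true_and] at hS
          rw [← weight_congr w (Function.update w a (y a + lam * (1 - y a))) a
            (fun j hj => (Function.update_of_ne hj _ w).symm) S hS]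
          rw [Function.update_self, Finset.insert_idem]
          have hwa : w a = y a := by simp [hw, ha]
          rw [hwa]
          ring
end Aux

/-- Continuous greedy progress (stochastic domination step): raising the
coordinates in `I` by `λ` dominates the independent-union process, i.e. `F(y') ≥ F(y'')`
where `y'_j = y_j + λ` on `I` and `y''_j = y_j + λ(1 − y_j)` on `I`; equivalently,
`F(y') − F(y) ≥ E[f(R ∪ D) − f(R)]` where `R ~ y` and, independently, `D` includes each
`j ∈ I` with probability `λ`. -/
theorem cg_progress_domination
    {X : Type*} [Fintype X] [DecidableEq X]
    (f : Finset X → ℝ)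
    (hmono : ∀ S T : Finset X, S ⊆ T → f S ≤ f T)
    (hsub : ∀ S T : Finset X, f (S ∪ T) + f (S ∩ T) ≤ f S + f T)
    (y : X → ℝ) (hy : ∀ j : X, y j ∈ Set.Icc (0 : ℝ) 1)
    (lam : ℝ) (hlam : lam ∈ Set.Icc (0 : ℝ) 1)
    (I : Finset X) (hI : ∀ j ∈ I, y j + lam ≤ 1) :
    mlext f (fun j => if j ∈ I then y j + lam * (1 - y j) else y j) ≤
      mlext f (fun j => if j ∈ I then y j + lam else y j) ∧
    mlext f (fun j => if j ∈ I then y j + lam else y j) - mlext f y ≥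
      ∑ R : Finset X, ∑ D ∈ I.powerset,
        (f (R ∪ D) - f R) *
          ((∏ j ∈ R, y j) * ∏ j ∈ Rᶜ, (1 - y j)) *
          (lam ^ D.card * (1 - lam) ^ (I.card - D.card)) := by
  obtain ⟨hl0, hl1⟩ := hlam
  have h1 : mlext f (fun j => if j ∈ I then y j + lam * (1 - y j) else y j) ≤
      mlext f (fun j => if j ∈ I then y j + lam else y j) := by
    refine mlext_mono f hmono _ _ ?_ ?_ ?_
    · intro j
      by_cases hj : j ∈ I <;> simp [hj]
      · nlinarith [(hy j).1, (hy j).2]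
      · exact (hy j).1
    · intro j
      by_cases hj : j ∈ I <;> simp [hj]
      nlinarith [(hy j).1]
    · intro j
      by_cases hj : j ∈ I <;> simp [hj]
      · exact hI j hj
      · exact (hy j).2
  refine ⟨h1, ?_⟩
  -- sum of the Bernoulli weights over the powerset is 1
  have hq : ∀ J : Finset X, ∑ D ∈ J.powerset,
      (lam ^ D.card * (1 - lam) ^ (J.card - D.card)) = 1 := by
    intro J
    induction J using Finset.induction_on with
    | empty => simp
    | @insert a J ha ih =>
      rw [Finset.sum_powerset_insert ha]
      have e1 : ∑ D ∈ J.powerset, lam ^ D.card * (1 - lam) ^ ((insert a J).card - D.card) =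
          (1 - lam) * ∑ D ∈ J.powerset, lam ^ D.card * (1 - lam) ^ (J.card - D.card) := by
        rw [Finset.mul_sum]
        refine Finset.sum_congr rfl fun D hD => ?_
        simp only [Finset.mem_powerset] at hD
        have hcard : D.card ≤ J.card := Finset.card_le_card hD
        rw [Finset.card_insert_of_notMem ha]
        have : J.card + 1 - D.card = (J.card - D.card) + 1 := by omega
        rw [this, pow_succ]; ring
      have e2 : ∑ D ∈ J.powerset,
          lam ^ (insert a D).card * (1 - lam) ^ ((insert a J).card - (insert a D).card) =
          lam * ∑ D ∈ J.powerset, lam ^ D.card * (1 - lam) ^ (J.card - D.card) := by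
        rw [Finset.mul_sum]
        refine Finset.sum_congr rfl fun D hD => ?_
        simp only [Finset.mem_powerset] at hD
        have haD : a ∉ D := fun h => ha (hD h)
        have hcard : D.card ≤ J.card := Finset.card_le_card hD
        rw [Finset.card_insert_of_notMem ha, Finset.card_insert_of_notMem haD]
        have : J.card + 1 - (D.card + 1) = J.card - D.card := by omega
        rw [this, pow_succ]; ring
      rw [e1, e2, ih]; ring
  have hsplit : ∑ R : Finset X, ∑ D ∈ I.powerset,
      (f (R ∪ D) - f R) * ((∏ j ∈ R, y j) * ∏ j ∈ Rᶜ, (1 - y j)) *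
        (lam ^ D.card * (1 - lam) ^ (I.card - D.card)) =
      mlext f (fun j => if j ∈ I then y j + lam * (1 - y j) else y j) - mlext f y := by
    rw [← expect_eq y lam I f]
    unfold mlext
    rw [← Finset.sum_sub_distrib]
    refine Finset.sum_congr rfl fun R _ => ?_
    have h2 : ∑ D ∈ I.powerset,
        (f (R ∪ D) - f R) * ((∏ j ∈ R, y j) * ∏ j ∈ Rᶜ, (1 - y j)) *
          (lam ^ D.card * (1 - lam) ^ (I.card - D.card)) =
        (∑ D ∈ I.powerset,
          f (R ∪ D) * ((∏ j ∈ R, y j) * ∏ j ∈ Rᶜ, (1 - y j)) *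
            (lam ^ D.card * (1 - lam) ^ (I.card - D.card))) -
        (f R * ((∏ j ∈ R, y j) * ∏ j ∈ Rᶜ, (1 - y j))) *
          ∑ D ∈ I.powerset, lam ^ D.card * (1 - lam) ^ (I.card - D.card) := by
      rw [Finset.mul_sum, ← Finset.sum_sub_distrib]
      exact Finset.sum_congr rfl fun D _ => by ring
    rw [h2, hq I, mul_one]
  rw [hsplit]
  linarith
end
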